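/- arXiv:2112.00979 — 3 statements merged into one kernel-verified Lean document; each statement's English description precedes it below -/
import Mathlib

section
/- With the setup of the compact SVD of the stacked matrix [A;B] = UΣV^T of rank r: for every θ ∈ ℝ^n, B θ lies in the affine set π_B U (π_A U)^+ A θ + π_B U · Null(π_A U), where (π_A U)^+ denotes the Moore–Penrose pseudoinverse. -/
open Matrix

/-- `P` is the Moore–Penrose pseudoinverse of `M`, characterized by the four Penrose axioms. -/
def IsMoorePenrose {m n : ℕ} (M : Matrix (Fin m) (Fin n) ℝ) (P : Matrix (Fin n) (Fin m) ℝ) : Prop :=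
  M * P * M = M ∧ P * M * P = P ∧ (M * P)ᵀ = M * P ∧ (P * M)ᵀ = P * M

/-- With `[A; B] = U Σ Vᵀ` a compact SVD of rank `r`, for every `θ ∈ ℝ^n`,
`B θ` lies in the affine set `π_B U (π_A U)⁺ A θ + π_B U · Null(π_A U)`, where `(π_A U)⁺` is
the Moore–Penrose pseudoinverse of `π_A U`. -/
theorem target_param_mem_affine_set {a b n r : ℕ}
    (A : Matrix (Fin a) (Fin n) ℝ) (B : Matrix (Fin b) (Fin n) ℝ)
    (hA : A.rank = a) (hB : B.rank = b)
    (hr : r = (Matrix.fromRows A B).rank)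
    (U : Matrix (Fin a ⊕ Fin b) (Fin r) ℝ) (S : Matrix (Fin r) (Fin r) ℝ)
    (V : Matrix (Fin n) (Fin r) ℝ)
    (hSVD : Matrix.fromRows A B = U * S * Vᵀ)
    (hU : Uᵀ * U = 1) (hV : Vᵀ * V = 1)
    (hSdiag : S.IsDiag) (hSinv : IsUnit S.det)
    (P : Matrix (Fin r) (Fin a) ℝ) (hP : IsMoorePenrose (U.submatrix Sum.inl id) P) :
    ∀ θ : Fin n → ℝ, ∃ w ∈ LinearMap.ker (U.submatrix Sum.inl id).mulVecLin,
      B.mulVec θ =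
        (U.submatrix Sum.inr id * P).mulVec (A.mulVec θ)
          + (U.submatrix Sum.inr id).mulVec w := by
  intro θ
  rw [Matrix.mul_assoc] at hSVD
  set UA := U.submatrix Sum.inl id with hUAdef
  set UB := U.submatrix Sum.inr id with hUBdef
  have hA' : A = UA * (S * Vᵀ) := by
    ext i j
    have := congrFun (congrFun hSVD (Sum.inl i)) j
    simpa [Matrix.fromRows_apply_inl, Matrix.mul_apply, hUAdef] using this
  have hB' : B = UB * (S * Vᵀ) := by
    ext i j
    have := congrFun (congrFun hSVD (Sum.inr i)) j
    simpa [Matrix.fromRows_apply_inr, Matrix.mul_apply, hUBdef] using this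
  set φ := (S * Vᵀ).mulVec θ with hφ
  have hAθ : A.mulVec θ = UA.mulVec φ := by
    rw [hA', ← Matrix.mulVec_mulVec]
  have hBθ : B.mulVec θ = UB.mulVec φ := by
    rw [hB', ← Matrix.mulVec_mulVec]
  refine ⟨φ - P.mulVec (A.mulVec θ), ?_, ?_⟩
  · have key : UA * (P * (UA * (S * Vᵀ))) = UA * (S * Vᵀ) := by
      rw [← Matrix.mul_assoc UA P, ← Matrix.mul_assoc (UA * P) UA, hP.1]
    simp only [Matrix.mulVecLin_apply, LinearMap.mem_ker, Matrix.mulVec_sub, hAθ, hφ,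
      Matrix.mulVec_mulVec]
    rw [key, sub_self]
  · rw [Matrix.mulVec_sub, ← Matrix.mulVec_mulVec, hBθ]
    abel
end

section
/- Let A ∈ ℝ^{a×n} and B ∈ ℝ^{b×n} have full row rank, let r = rank([A;B]), κ = dim(Row(A)∩Row(B))/b, and let [A;B] = UΣV^T be a compact SVD. Then the subspace π_B U · Null(π_A U) ⊆ ℝ^b has dimension (1-κ)·b. -/
open Matrix

/-- The row space of a matrix: the span of its rows, a subspace of `ℝ^n`. -/
def rowSpace {a n : ℕ} (M : Matrix (Fin a) (Fin n) ℝ) : Submodule ℝ (Fin n → ℝ) :=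
  Submodule.span ℝ (Set.range M)

/-- With `A`, `B` of full row rank, `r = rank([A;B])`,
`κ = dim(Row(A) ∩ Row(B))/b`, and `[A;B] = U Σ Vᵀ` a compact SVD, the subspace
`π_B U · Null(π_A U) ⊆ ℝ^b` has dimension `(1 - κ)·b`. -/
theorem idiosyncratic_subspace_dim {a b n r : ℕ}
    (A : Matrix (Fin a) (Fin n) ℝ) (B : Matrix (Fin b) (Fin n) ℝ)
    (hA : A.rank = a) (hB : B.rank = b)
    (hr : r = (Matrix.fromRows A B).rank)
    (κ : ℝ) (hκ : κ = (Module.finrank ℝ ↥(rowSpace A ⊓ rowSpace B) : ℝ) / b)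
    (U : Matrix (Fin a ⊕ Fin b) (Fin r) ℝ) (S : Matrix (Fin r) (Fin r) ℝ)
    (V : Matrix (Fin n) (Fin r) ℝ)
    (hSVD : Matrix.fromRows A B = U * S * Vᵀ)
    (hU : Uᵀ * U = 1) (hV : Vᵀ * V = 1)
    (hSdiag : S.IsDiag) (hSinv : IsUnit S.det) :
    (Module.finrank ℝ
        ↥(Submodule.map (U.submatrix Sum.inr id).mulVecLin
            (LinearMap.ker (U.submatrix Sum.inl id).mulVecLin)) : ℝ)
      = (1 - κ) * b := by
  set PA := U.submatrix Sum.inl id with hPA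
  set PB := U.submatrix Sum.inr id with hPB
  -- U has a left inverse, hence is injective
  have hUinj : Function.Injective U.mulVecLin := by
    have h : ∀ v, Uᵀ.mulVecLin (U.mulVecLin v) = v := by
      intro v
      rw [← LinearMap.comp_apply, ← Matrix.mulVecLin_mul, hU, Matrix.mulVecLin_one,
        LinearMap.id_apply]
    exact Function.LeftInverse.injective h
  -- PB is injective on the kernel of PA
  set K := LinearMap.ker PA.mulVecLin with hK
  have hfinj : Function.Injective (PB.mulVecLin ∘ₗ K.subtype) := by
    rw [← LinearMap.ker_eq_bot, LinearMap.ker_eq_bot']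
    intro x hx
    have hxA : PA.mulVec (x : Fin r → ℝ) = 0 := x.2
    have hxB : PB.mulVec (x : Fin r → ℝ) = 0 := hx
    apply Subtype.ext
    apply hUinj
    show U.mulVec (x : Fin r → ℝ) = U.mulVecLin 0
    rw [map_zero]
    funext c
    cases c with
    | inl i => exact congrFun hxA i
    | inr i => exact congrFun hxB i
  -- dimension of the image equals dimension of the kernel
  have hdim1 : Module.finrank ℝ ↥(Submodule.map PB.mulVecLin K) = Module.finrank ℝ ↥K := by
    have hrange : LinearMap.range (PB.mulVecLin ∘ₗ K.subtype) = Submodule.map PB.mulVecLin K := by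
      rw [LinearMap.range_comp, Submodule.range_subtype]
    rw [← hrange, LinearMap.finrank_range_of_inj hfinj]
  -- S * Vᵀ is surjective as a linear map
  have hXsurj : Function.Surjective (S * Vᵀ).mulVecLin := by
    intro y
    refine ⟨(V * S⁻¹).mulVec y, ?_⟩
    show (S * Vᵀ).mulVec ((V * S⁻¹).mulVec y) = y
    rw [Matrix.mulVec_mulVec]
    have : S * Vᵀ * (V * S⁻¹) = 1 := by
      rw [Matrix.mul_assoc, ← Matrix.mul_assoc Vᵀ, hV, Matrix.one_mul,
        Matrix.mul_nonsing_inv S hSinv]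
    rw [this, Matrix.one_mulVec]
  -- A = PA * (S * Vᵀ)
  have hAeq : A = PA * (S * Vᵀ) := by
    have h1 : (Matrix.fromRows A B).submatrix Sum.inl id = A := by
      ext i j; rfl
    rw [← h1, hSVD, Matrix.mul_assoc,
      Matrix.submatrix_mul U (S * Vᵀ) Sum.inl id id Function.bijective_id,
      Matrix.submatrix_id_id]
  -- rank of PA equals rank of A = a
  have hrankPA : Module.finrank ℝ ↥(LinearMap.range PA.mulVecLin) = a := by
    have : LinearMap.range A.mulVecLin = LinearMap.range PA.mulVecLin := by
      rw [hAeq, Matrix.mulVecLin_mul, LinearMap.range_comp,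
        LinearMap.range_eq_top.mpr hXsurj, Submodule.map_top]
    rw [← this]
    exact hA
  -- rank-nullity
  have hrn : Module.finrank ℝ ↥(LinearMap.range PA.mulVecLin)
      + Module.finrank ℝ ↥K = r := by
    rw [hK]
    have := LinearMap.finrank_range_add_finrank_ker PA.mulVecLin
    simpa using this
  -- row-space dimensions
  have hdimA : Module.finrank ℝ ↥(rowSpace A) = a := by
    rw [rowSpace]; rw [Matrix.rank_eq_finrank_span_row] at hA; exact hA
  have hdimB : Module.finrank ℝ ↥(rowSpace B) = b := by
    rw [rowSpace]; rw [Matrix.rank_eq_finrank_span_row] at hB; exact hB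
  have hru : Set.range (Matrix.fromRows A B) = Set.range A ∪ Set.range B :=
    Set.Sum.elim_range A B
  have hspan : Submodule.span ℝ (Set.range (Matrix.fromRows A B)) = rowSpace A ⊔ rowSpace B := by
    rw [hru, Submodule.span_union]; rfl
  have hdimSup : Module.finrank ℝ ↥(rowSpace A ⊔ rowSpace B) = r := by
    rw [hr, Matrix.rank_eq_finrank_span_row, ← hspan]; rfl
  set d := Module.finrank ℝ ↥(rowSpace A ⊓ rowSpace B) with hd
  have hsum : r + d = a + b := by
    have h := Submodule.finrank_sup_add_finrank_inf_eq (rowSpace A) (rowSpace B)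
    rw [hdimSup, hdimA, hdimB] at h
    exact h
  -- finrank K + d = b
  have hKd : Module.finrank ℝ ↥K + d = b := by omega
  rw [hdim1, hκ]
  have hcast : (Module.finrank ℝ ↥K : ℝ) + (d : ℝ) = (b : ℝ) := by exact_mod_cast hKd
  rcases Nat.eq_zero_or_pos b with hb0 | hbpos
  · have hK0 : Module.finrank ℝ ↥K = 0 := by omega
    rw [hK0, hb0]
    simp
  · have hbne : (b : ℝ) ≠ 0 := Nat.cast_ne_zero.mpr (by omega)
    field_simp
    linarith
end

section
/- Every target reward parameter decomposes into systematic and idiosyncratic components: with A, B, U, π_A, π_B as above, there exist a matrix D_T = π_B U (π_A U)^+ ∈ ℝ^{b×a} and a matrix D_G ∈ ℝ^{b×(1-κ)b} with orthonormal columns spanning π_B U · Null(π_A U), such that for every θ ∈ ℝ^n there exists ψ ∈ ℝ^{(1-κ)b} with B θ = D_T A θ + D_G ψ. -/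
open Matrix

/-- Systematic/idiosyncratic decomposition: with `D_T = π_B U (π_A U)⁺` and
some `D_G ∈ ℝ^{b×(1-κ)b}` with orthonormal columns spanning `π_B U · Null(π_A U)`, every
target parameter decomposes as `B θ = D_T A θ + D_G ψ` for some `ψ ∈ ℝ^{(1-κ)b}`.
Here `(1-κ)·b = b - dim(Row(A) ∩ Row(B))` is a natural number. -/
theorem systematic_idiosyncratic_decomposition {a b n r : ℕ}
    (A : Matrix (Fin a) (Fin n) ℝ) (B : Matrix (Fin b) (Fin n) ℝ)
    (hA : A.rank = a) (hB : B.rank = b)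
    (κ : ℝ) (hκ : κ = (Module.finrank ℝ ↥(rowSpace A ⊓ rowSpace B) : ℝ) / b)
    (hr : r = (Matrix.fromRows A B).rank)
    (U : Matrix (Fin a ⊕ Fin b) (Fin r) ℝ) (S : Matrix (Fin r) (Fin r) ℝ)
    (V : Matrix (Fin n) (Fin r) ℝ)
    (hSVD : Matrix.fromRows A B = U * S * Vᵀ)
    (hU : Uᵀ * U = 1) (hV : Vᵀ * V = 1)
    (hSdiag : S.IsDiag) (hSinv : IsUnit S.det)
    (P : Matrix (Fin r) (Fin a) ℝ) (hP : IsMoorePenrose (U.submatrix Sum.inl id) P)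
    (k : ℕ) (hk : (k : ℝ) = (1 - κ) * b) :
    ∃ DG : Matrix (Fin b) (Fin k) ℝ,
      DGᵀ * DG = 1 ∧
      LinearMap.range DG.mulVecLin =
        Submodule.map (U.submatrix Sum.inr id).mulVecLin
          (LinearMap.ker (U.submatrix Sum.inl id).mulVecLin) ∧
      ∀ θ : Fin n → ℝ, ∃ ψ : Fin k → ℝ,
        B.mulVec θ =
          (U.submatrix Sum.inr id * P).mulVec (A.mulVec θ) + DG.mulVec ψ := by
  classical
  set UA : Matrix (Fin a) (Fin r) ℝ := U.submatrix Sum.inl id with hUAdef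
  set UB : Matrix (Fin b) (Fin r) ℝ := U.submatrix Sum.inr id with hUBdef
  -- factorizations of A and B
  have hA' : A = UA * (S * Vᵀ) := by
    ext i j
    have h1 : A i j = (U * S * Vᵀ) (Sum.inl i) j := by rw [← hSVD]; rfl
    rw [h1, Matrix.mul_assoc]
    simp [Matrix.mul_apply, hUAdef]
  have hB' : B = UB * (S * Vᵀ) := by
    ext i j
    have h1 : B i j = (U * S * Vᵀ) (Sum.inr i) j := by rw [← hSVD]; rfl
    rw [h1, Matrix.mul_assoc]
    simp [Matrix.mul_apply, hUBdef]
  -- rank of UA is a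
  have hUAr : UA.rank = a := by
    refine le_antisymm ?_ ?_
    · simpa using UA.rank_le_card_height
    · calc a = A.rank := hA.symm
        _ ≤ UA.rank := by rw [hA']; exact Matrix.rank_mul_le_left _ _
  -- dimension bookkeeping
  have hdA : Module.finrank ℝ (rowSpace A) = a := by
    rw [rowSpace]; exact (Matrix.rank_eq_finrank_span_row A).symm.trans hA
  have hdB : Module.finrank ℝ (rowSpace B) = b := by
    rw [rowSpace]; exact (Matrix.rank_eq_finrank_span_row B).symm.trans hB
  set d := Module.finrank ℝ ↥(rowSpace A ⊓ rowSpace B) with hd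
  have hgrass : r + d = a + b := by
    have h1 : Submodule.span ℝ (Set.range (Matrix.fromRows A B)) = rowSpace A ⊔ rowSpace B := by
      rw [rowSpace, rowSpace, ← Submodule.span_union]
      exact congrArg (Submodule.span ℝ) (Set.Sum.elim_range A.row B.row)
    have h2 := Submodule.finrank_sup_add_finrank_inf_eq (rowSpace A) (rowSpace B)
    have h3 : r = Module.finrank ℝ ↥(rowSpace A ⊔ rowSpace B) := by
      rw [hr, Matrix.rank_eq_finrank_span_row]; exact congrArg (fun s : Submodule ℝ (Fin n → ℝ) => Module.finrank ℝ s) h1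
    rw [← h3, hdA, hdB, ← hd] at h2
    exact h2
  have hdb : d ≤ b := by
    rw [← hdB]
    exact Submodule.finrank_mono inf_le_right
  have hkd : k + d = b := by
    rcases Nat.eq_zero_or_pos b with hb0 | hbpos
    · have hd0 : d = 0 := by omega
      have hk0 : (k : ℝ) = 0 := by rw [hk, hb0]; simp
      have : k = 0 := by exact_mod_cast hk0
      omega
    · have hbne : (b : ℝ) ≠ 0 := Nat.cast_ne_zero.mpr hbpos.ne'
      have h1 : (k : ℝ) + (d : ℝ) = (b : ℝ) := by
        rw [hk, hκ]
        field_simp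
        ring
      exact_mod_cast h1
  have hra : r = a + k := by omega
  -- injectivity of U
  have hUinj : ∀ x : Fin r → ℝ, U.mulVec x = 0 → x = 0 := by
    intro x hx
    have h1 : (Uᵀ * U).mulVec x = 0 := by
      rw [← Matrix.mulVec_mulVec, hx, Matrix.mulVec_zero]
    rwa [hU, Matrix.one_mulVec] at h1
  -- dimension of the kernel of UA
  have hkerA : Module.finrank ℝ (LinearMap.ker UA.mulVecLin) = k := by
    have h1 := UA.mulVecLin.finrank_range_add_finrank_ker
    have h2 : Module.finrank ℝ (Fin r → ℝ) = r := by simp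
    have h3 : Module.finrank ℝ (LinearMap.range UA.mulVecLin) = a := hUAr
    omega
  set Wsub : Submodule ℝ (Fin b → ℝ) :=
    Submodule.map UB.mulVecLin (LinearMap.ker UA.mulVecLin) with hWdef
  -- dimension of Wsub
  have hWfin : Module.finrank ℝ Wsub = k := by
    set g : (LinearMap.ker UA.mulVecLin) →ₗ[ℝ] (Fin b → ℝ) :=
      UB.mulVecLin ∘ₗ (LinearMap.ker UA.mulVecLin).subtype with hg
    have hker : LinearMap.ker g = ⊥ := by
      rw [LinearMap.ker_eq_bot']
      intro z hz
      have h1 : UA.mulVec (z : Fin r → ℝ) = 0 := z.2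
      have h2 : UB.mulVec (z : Fin r → ℝ) = 0 := hz
      have h3 : (z : Fin r → ℝ) = 0 := by
        apply hUinj
        funext s
        cases s with
        | inl i => exact congrFun h1 i
        | inr j => exact congrFun h2 j
      exact Subtype.ext h3
    have hrg : LinearMap.range g = Wsub := by
      rw [hg, LinearMap.range_comp, Submodule.range_subtype]
    have h4 := g.finrank_range_add_finrank_ker
    rw [hrg, hker, finrank_bot, add_zero, hkerA] at h4
    exact h4
  -- orthonormal basis of Wsub, viewed inside Euclidean space
  set W' : Submodule ℝ (EuclideanSpace ℝ (Fin b)) :=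
    Wsub.map (WithLp.linearEquiv 2 ℝ (Fin b → ℝ)).symm.toLinearMap with hW'def
  have hW'fin : Module.finrank ℝ W' = k :=
    (LinearEquiv.finrank_map_eq (WithLp.linearEquiv 2 ℝ (Fin b → ℝ)).symm Wsub).trans hWfin
  let ob : OrthonormalBasis (Fin k) ℝ W' :=
    (stdOrthonormalBasis ℝ W').reindex (finCongr hW'fin)
  set DG : Matrix (Fin b) (Fin k) ℝ :=
    Matrix.of (fun i j => ((ob j : EuclideanSpace ℝ (Fin b)) : Fin b → ℝ) i) with hDG
  -- column identity: DG.mulVec ψ is the linear combination of the basis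
  have hcol : ∀ ψ : Fin k → ℝ,
      DG.mulVec ψ = (((∑ j, ψ j • ob j : W') : EuclideanSpace ℝ (Fin b)) : Fin b → ℝ) := by
    intro ψ
    funext i
    have hc : (((∑ j, ψ j • ob j : W') : EuclideanSpace ℝ (Fin b)) : Fin b → ℝ) i
        = ∑ j, ψ j * ((ob j : EuclideanSpace ℝ (Fin b)) : Fin b → ℝ) i := by
      rw [Submodule.coe_sum]
      rw [WithLp.ofLp_sum, Finset.sum_apply]
      simp [Pi.smul_apply, smul_eq_mul]
    rw [hc]
    simp [Matrix.mulVec, dotProduct, hDG, mul_comm]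
  -- orthonormality
  have hON : DGᵀ * DG = 1 := by
    ext i j
    have hij := orthonormal_iff_ite.mp ob.orthonormal i j
    rw [Submodule.coe_inner] at hij
    have h1 : (inner ℝ ((ob i : EuclideanSpace ℝ (Fin b))) ((ob j : EuclideanSpace ℝ (Fin b))) : ℝ)
        = ∑ l, DG l i * DG l j := by
      simp [PiLp.inner_apply, RCLike.inner_apply, hDG]
      exact Finset.sum_congr rfl fun l _ => mul_comm _ _
    rw [Matrix.mul_apply]
    simp only [Matrix.transpose_apply]
    rw [← h1, hij, Matrix.one_apply]
  -- range identity
  have hrange : LinearMap.range DG.mulVecLin = Wsub := by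
    apply le_antisymm
    · rintro w ⟨ψ, rfl⟩
      have : DG.mulVecLin ψ = (((∑ j, ψ j • ob j : W') : EuclideanSpace ℝ (Fin b)) : Fin b → ℝ) :=
        hcol ψ
      rw [this]
      obtain ⟨y, hy, hy'⟩ := (∑ j, ψ j • ob j : W').2
      rw [← hy']
      exact hy
    · intro w hw
      refine ⟨fun j => ob.repr ⟨WithLp.toLp 2 w, ⟨w, hw, rfl⟩⟩ j, ?_⟩
      have h1 := ob.sum_repr ⟨WithLp.toLp 2 w, ⟨w, hw, rfl⟩⟩
      have h2 := hcol (fun j => ob.repr ⟨WithLp.toLp 2 w, ⟨w, hw, rfl⟩⟩ j)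
      show DG.mulVec _ = w
      rw [h2, h1]
  refine ⟨DG, hON, hrange, ?_⟩
  -- the decomposition
  intro θ
  obtain ⟨y, hy⟩ : ∃ y : Fin r → ℝ, y = (S * Vᵀ).mulVec θ := ⟨_, rfl⟩
  have hAθ : A.mulVec θ = UA.mulVec y := by rw [hA', hy, ← Matrix.mulVec_mulVec]
  have hBθ : B.mulVec θ = UB.mulVec y := by rw [hB', hy, ← Matrix.mulVec_mulVec]
  obtain ⟨z, hz⟩ : ∃ z : Fin r → ℝ, z = y - P.mulVec (UA.mulVec y) := ⟨_, rfl⟩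
  have hzker : UA.mulVec z = 0 := by
    have h1 : UA.mulVec (P.mulVec (UA.mulVec y)) = UA.mulVec y := by
      rw [Matrix.mulVec_mulVec, Matrix.mulVec_mulVec, hP.1]
    rw [hz, Matrix.mulVec_sub, h1, sub_self]
  have hmem : UB.mulVec z ∈ Wsub := ⟨z, hzker, rfl⟩
  rw [← hrange] at hmem
  obtain ⟨ψ, hψ⟩ := hmem
  refine ⟨ψ, ?_⟩
  have hDT : (UB * P).mulVec (A.mulVec θ) = UB.mulVec (P.mulVec (UA.mulVec y)) := by
    rw [hAθ, ← Matrix.mulVec_mulVec]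
  have hψ' : DG.mulVec ψ = UB.mulVec z := hψ
  rw [hBθ, hDT, hψ', hz, Matrix.mulVec_sub]
  abel
end
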